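/- For a sequence s of positive integers with s_1 ≥ 2 and s_r ≥ 2, the multitangent function Te^s(z) = Σ_{-∞ < n_r < ... < n_1 < +∞} ∏ (n_i+z)^{-s_i} factorizes as Te^s(z) = Σ over all decompositions s = s¹·s²·s³ (into beginning, middle, end, possibly empty) with length of s² at most 1, of He_+^{s¹}(z) · Ce^{s²}(z) · He_-^{s³}(z), where Ce^∅ = 1 and Ce^{(t)}(z) = z^{-t}. -/

import Mathlib

/-- Hurwitz multizeta function over positive indices, for a word `l`. -/
noncomputable def HePlus (l : List ℕ) (z : ℂ) : ℂ :=
  ∑' n : {f : Fin l.length → ℕ // StrictAnti f ∧ ∀ i, 0 < f i},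
    ∏ i, (((n.1 i : ℂ) + z) ^ l.get i)⁻¹

/-- Hurwitz multizeta function over negative indices, for a word `l`. -/
noncomputable def HeMinus (l : List ℕ) (z : ℂ) : ℂ :=
  ∑' n : {f : Fin l.length → ℤ // StrictAnti f ∧ ∀ i, f i < 0},
    ∏ i, (((n.1 i : ℂ) + z) ^ l.get i)⁻¹

/-- Multitangent function: bilateral sum over strictly decreasing integer tuples. -/
noncomputable def Te (l : List ℕ) (z : ℂ) : ℂ :=
  ∑' n : {f : Fin l.length → ℤ // StrictAnti f},
    ∏ i, (((n.1 i : ℂ) + z) ^ l.get i)⁻¹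

/-- The correction mould `Ce`. -/
noncomputable def Ce (l : List ℕ) (z : ℂ) : ℂ :=
  match l with
  | [] => 1
  | [t] => (z ^ t)⁻¹
  | _ => 0

/-!
Every strictly decreasing tuple `n₁ > ⋯ > n_r` of integers is positive on an initial segment of
indices, zero at no more than one index, and negative on the rest. Cutting at these two places
identifies the index set of `Te^s` with the disjoint union, over the cuts `(a, b)` with
`a ≤ b ≤ a + 1`, of the products of the index sets of `He₊^{s¹}` and `He₋^{s³}`, where
`s = s¹·s²·s³` and `s²` has length `b - a`; the summand factors accordingly, a zero entry
contributing `z^{-t}`. Summing fibre by fibre needs the absolute convergence of `He₊` and `He₋`: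
the factors satisfy `|n + z|⁻¹ ≤ C (|n| + 1)⁻¹`, and when the first (resp. last) entry dominates
the others in absolute value and carries an exponent `≥ 2`, the product `∏ (|n_i| + 1)^{-s_i}` is
at most `∏ (|n_i| + 1)^{-(1 + 1/r)}`, which is summable over all of `ℤ^r`.
-/

open Finset

theorem summable_pi_prod_of_nonneg {ι β : Type*} [Fintype ι] {f : ι → β → ℝ}
    (hf₀ : ∀ i b, 0 ≤ f i b) (hf : ∀ i, Summable (f i)) :
    Summable fun x : ι → β => ∏ i, f i (x i) := by
  classical
  refine summable_of_sum_le (c := ∏ i, ∑' b, f i b)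
    (fun x => prod_nonneg fun i _ => hf₀ i (x i)) fun u => ?_
  calc ∑ x ∈ u, ∏ i, f i (x i)
      ≤ ∑ x ∈ Fintype.piFinset fun i => u.image (· i), ∏ i, f i (x i) :=
        sum_le_sum_of_subset_of_nonneg (fun x hx => Fintype.mem_piFinset.2 fun i =>
          mem_image_of_mem _ hx) fun x _ _ => prod_nonneg fun i _ => hf₀ i (x i)
    _ = ∏ i, ∑ b ∈ u.image (· i), f i b := (prod_univ_sum _ _).symm
    _ ≤ ∏ i, ∑' b, f i b := prod_le_prod (fun i _ => sum_nonneg fun b _ => hf₀ i b)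
        fun i _ => (hf i).sum_le_tsum _ fun b _ => hf₀ i b

theorem exists_norm_inv_intCast_add_le (z : ℂ) :
    ∃ C, ∀ n : ℤ, ‖((n : ℂ) + z)⁻¹‖ ≤ C * (|(n : ℝ)| + 1)⁻¹ := by
  set N : ℕ := ⌈2 * ‖z‖⌉₊ + 1
  set q : ℤ → ℝ := fun n => ‖((n : ℂ) + z)⁻¹‖ * (|(n : ℝ)| + 1)
  refine ⟨2 + ∑ k ∈ Icc (-(N : ℤ)) N, q k, fun n => ?_⟩
  have hn₁ : 0 < |(n : ℝ)| + 1 := by positivity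
  rw [← div_eq_mul_inv, le_div_iff₀ hn₁]
  have hq : ∀ k, 0 ≤ q k := fun k => by positivity
  by_cases hn : n ∈ Icc (-(N : ℤ)) N
  · linarith [single_le_sum (fun k _ => hq k) hn,
      sum_nonneg fun k (_ : k ∈ Icc (-(N : ℤ)) N) => hq k]
  · have hN : (N : ℝ) < |(n : ℝ)| := by
      rw [mem_Icc, not_and_or, not_le, not_le] at hn
      rw [← Int.cast_abs, ← Int.cast_natCast]
      exact_mod_cast lt_abs.2 (hn.symm.imp id fun h => by omega)
    have hz : 2 * ‖z‖ + 1 ≤ N := by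
      have := Nat.le_ceil (2 * ‖z‖); push_cast [N]; linarith
    have hnorm : (|(n : ℝ)| + 1) / 2 ≤ ‖(n : ℂ) + z‖ := by
      have := norm_sub_norm_le (n : ℂ) (-z)
      rw [sub_neg_eq_add, norm_neg, Complex.norm_intCast] at this
      linarith
    have hpos : 0 < ‖(n : ℂ) + z‖ := by linarith
    have : q n ≤ 2 := by
      simp only [q, norm_inv]
      rw [inv_mul_le_iff₀ hpos]; linarith
    linarith [sum_nonneg fun k (_ : k ∈ Icc (-(N : ℤ)) N) => hq k]

theorem prod_rpow_one_add_inv_card_le_prod_pow {ι : Type*} [Fintype ι] {g : ι → ℝ}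
    {s : ι → ℕ} (i₀ : ι) (hg₁ : ∀ i, 1 ≤ g i) (hg : ∀ i, g i ≤ g i₀)
    (hs : ∀ i, 1 ≤ s i) (hs₀ : 2 ≤ s i₀) :
    ∏ i, g i ^ (1 + (Fintype.card ι : ℝ)⁻¹) ≤ ∏ i, g i ^ s i := by
  classical
  have : Nonempty ι := ⟨i₀⟩
  have hg₀ : ∀ i, 0 ≤ g i := fun i => zero_le_one.trans (hg₁ i)
  have hroot : (∏ i, g i) ^ (Fintype.card ι : ℝ)⁻¹ ≤ g i₀ := by
    calc (∏ i, g i) ^ (Fintype.card ι : ℝ)⁻¹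
        ≤ (g i₀ ^ Fintype.card ι) ^ (Fintype.card ι : ℝ)⁻¹ :=
          Real.rpow_le_rpow (prod_nonneg fun i _ => hg₀ i)
            ((prod_le_prod (fun i _ => hg₀ i) fun i _ => hg i).trans_eq (by simp)) (by positivity)
      _ = g i₀ := Real.pow_rpow_inv_natCast (hg₀ i₀) Fintype.card_ne_zero
  calc ∏ i, g i ^ (1 + (Fintype.card ι : ℝ)⁻¹)
      = (∏ i, g i) * (∏ i, g i) ^ (Fintype.card ι : ℝ)⁻¹ := by
        rw [← Real.finsetProd_rpow _ _ fun i _ => hg₀ i, ← prod_mul_distrib]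
        exact prod_congr rfl fun i _ => by
          rw [Real.rpow_add' (hg₀ i) (by positivity), Real.rpow_one]
    _ ≤ (∏ i, g i) * g i₀ := mul_le_mul_of_nonneg_left hroot (prod_nonneg fun i _ => hg₀ i)
    _ = g i₀ ^ 2 * ∏ i ∈ univ.erase i₀, g i := by
        rw [← mul_prod_erase univ g (mem_univ i₀)]; ring
    _ ≤ g i₀ ^ s i₀ * ∏ i ∈ univ.erase i₀, g i ^ s i :=
        mul_le_mul (pow_le_pow_right₀ (hg₁ i₀) hs₀)
          (prod_le_prod (fun i _ => hg₀ i) fun i _ =>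
            le_self_pow₀ (hg₁ i) (Nat.one_le_iff_ne_zero.1 (hs i)))
          (prod_nonneg fun i _ => hg₀ i) (by have := hg₀ i₀; positivity)
    _ = ∏ i, g i ^ s i := mul_prod_erase univ (fun i => g i ^ s i) (mem_univ i₀)

theorem summable_inv_abs_intCast_add_one_rpow {p : ℝ} (hp : 1 < p) :
    Summable fun n : ℤ => ((|(n : ℝ)| + 1) ^ p)⁻¹ := by
  refine ((Real.summable_one_div_int_add_rpow (1 / 2) p).2 hp).of_nonneg_of_le
    (fun n => by positivity) fun n => ?_
  have h₀ : 0 < |(n : ℝ) + 1 / 2| := abs_pos.2 fun h => by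
    have : (2 * n + 1 : ℝ) = 0 := by linarith
    exact_mod_cast (by omega : (2 * n + 1 : ℤ) ≠ 0) <| by exact_mod_cast this
  rw [one_div]
  refine inv_anti₀ (by positivity) (Real.rpow_le_rpow h₀.le ?_ (by linarith))
  linarith [abs_add_le (n : ℝ) (1 / 2), abs_of_pos (by norm_num : (0 : ℝ) < 1 / 2)]

theorem summable_norm_prod_inv_intCast_add_pow {ι : Type*} [Fintype ι] (s : ι → ℕ)
    (i₀ : ι) (hs : ∀ i, 1 ≤ s i) (hs₀ : 2 ≤ s i₀) (z : ℂ) :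
    Summable fun f : {f : ι → ℤ // ∀ i, |f i| ≤ |f i₀|} =>
      ‖∏ i, (((f.1 i : ℂ) + z) ^ s i)⁻¹‖ := by
  obtain ⟨C, hC⟩ := exists_norm_inv_intCast_add_le z
  have hC₀ : 0 ≤ C := by simpa using (norm_nonneg _).trans (hC 0)
  set p : ℝ := 1 + (Fintype.card ι : ℝ)⁻¹
  have hp : 1 < p := by
    have : Nonempty ι := ⟨i₀⟩
    simpa [p] using Fintype.card_pos
  have hsum := summable_pi_prod_of_nonneg (fun _ n => by positivity)
    fun (_ : ι) => summable_inv_abs_intCast_add_one_rpow hp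
  refine ((hsum.subtype {f | ∀ i, |f i| ≤ |f i₀|}).mul_left (∏ i, C ^ s i)).of_nonneg_of_le
    (fun _ => norm_nonneg _) fun f => ?_
  set g : ι → ℝ := fun i => |(f.1 i : ℝ)| + 1
  have hg₁ : ∀ i, 1 ≤ g i := fun i => by simp [g]
  have hg : ∀ i, g i ≤ g i₀ := fun i => by
    simpa [g] using (by exact_mod_cast f.2 i : |(f.1 i : ℝ)| ≤ |(f.1 i₀ : ℝ)|)
  calc ‖∏ i, (((f.1 i : ℂ) + z) ^ s i)⁻¹‖
      = ∏ i, ‖((f.1 i : ℂ) + z)⁻¹‖ ^ s i := by simp [norm_prod, inv_pow]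
    _ ≤ ∏ i, (C * (g i)⁻¹) ^ s i :=
        prod_le_prod (fun i _ => by positivity) fun i _ =>
          pow_le_pow_left₀ (norm_nonneg _) (hC _) _
    _ = (∏ i, C ^ s i) * (∏ i, g i ^ s i)⁻¹ := by simp [mul_pow, prod_mul_distrib, inv_pow]
    _ ≤ (∏ i, C ^ s i) * (∏ i, g i ^ p)⁻¹ := by
        refine mul_le_mul_of_nonneg_left (inv_anti₀ (prod_pos fun i _ => by positivity) ?_)
          (prod_nonneg fun i _ => by positivity)
        exact prod_rpow_one_add_inv_card_le_prod_pow i₀ hg₁ hg hs hs₀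
    _ = (∏ i, C ^ s i) * ∏ i, ((|(f.1 i : ℝ)| + 1) ^ p)⁻¹ := by rw [prod_inv_distrib]

theorem List.prod_get_eq_prod_take_mul_prod_drop {α M : Type*} [CommMonoid M] (l : List α)
    (a : ℕ) (F : ℕ → α → M) :
    ∏ i : Fin l.length, F i (l.get i) =
      (∏ i : Fin (l.take a).length, F i ((l.take a).get i)) *
        ∏ j : Fin (l.drop a).length, F (a + j) ((l.drop a).get j) := by
  set G : ℕ → M := fun k => if h : k < l.length then F k l[k] else 1
  have hl : ∀ i : Fin l.length, F i (l.get i) = G i := fun i => by simp [G]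
  have htake : ∀ i : Fin (l.take a).length, F i ((l.take a).get i) = G i := fun i => by
    have := i.2; simp only [List.length_take] at this
    simp [G, show (i : ℕ) < l.length by omega]
  have hdrop : ∀ j : Fin (l.drop a).length, F (a + j) ((l.drop a).get j) = G (a + j) := by
    intro j
    have := j.2; simp only [List.length_drop] at this
    simp [G, show a + j < l.length by omega]
  rw [Fintype.prod_congr _ _ hl, Fintype.prod_congr _ _ htake,
    Fintype.prod_congr _ _ hdrop, Fin.prod_univ_eq_prod_range G, Fin.prod_univ_eq_prod_range G,
    Fin.prod_univ_eq_prod_range (fun j => G (a + j)), List.length_take, List.length_drop]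
  rcases le_total a l.length with h | h
  · rw [min_eq_left h, ← prod_range_add, Nat.add_sub_cancel' h]
  · simp [min_eq_right h, Nat.sub_eq_zero_of_le h]

theorem List.get_take_zero_eq_head! {α : Type*} [Inhabited α] (l : List α) (a : ℕ)
    (h : 0 < (l.take a).length) : (l.take a).get ⟨0, h⟩ = l.head! := by
  rw [List.head!_eq_getElem!, getElem!_pos l 0 (by simp at h; omega)]
  simp

theorem List.get_drop_last_eq_getLast! {α : Type*} [Inhabited α] (l : List α) (b : ℕ)
    (h : 0 < (l.drop b).length) :
    (l.drop b).get ⟨(l.drop b).length - 1, by omega⟩ = l.getLast! := by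
  simp only [List.length_drop] at h
  rw [List.getLast!_eq_getElem!, getElem!_pos l _ (by omega)]
  simp only [List.get_eq_getElem, List.getElem_drop, List.length_drop]
  congr 1
  omega

namespace Multitangent

abbrev PosTuples (r : ℕ) := {f : Fin r → ℕ // StrictAnti f ∧ ∀ i, 0 < f i}
abbrev NegTuples (r : ℕ) := {f : Fin r → ℤ // StrictAnti f ∧ ∀ i, f i < 0}
abbrev DecTuples (r : ℕ) := {f : Fin r → ℤ // StrictAnti f}

theorem summable_norm_prod_posTuples {r : ℕ} (s : Fin r → ℕ) (hs : ∀ i, 1 ≤ s i)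
    (hs₀ : ∀ h : 0 < r, 2 ≤ s ⟨0, h⟩) (z : ℂ) :
    Summable fun g : PosTuples r => ‖∏ i, ((((g.1 i : ℤ) : ℂ) + z) ^ s i)⁻¹‖ := by
  rcases r.eq_zero_or_pos with rfl | hr
  · exact Summable.of_finite
  let e : PosTuples r → {f : Fin r → ℤ // ∀ i, |f i| ≤ |f ⟨0, hr⟩|} := fun g =>
    ⟨fun i => g.1 i, fun i => by
      simpa [abs_of_pos] using
        g.2.1.antitone (show (⟨0, hr⟩ : Fin r) ≤ i from Nat.zero_le _)⟩
  have he : Function.Injective e := fun g g' h => Subtype.ext <| funext fun i => by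
    simpa [e] using congrFun (congrArg Subtype.val h) i
  exact ((summable_norm_prod_inv_intCast_add_pow s _ hs (hs₀ hr) z).comp_injective he).congr
    fun _ => rfl

theorem summable_norm_prod_negTuples {r : ℕ} (s : Fin r → ℕ) (hs : ∀ i, 1 ≤ s i)
    (hs₀ : ∀ h : 0 < r, 2 ≤ s ⟨r - 1, by omega⟩) (z : ℂ) :
    Summable fun h : NegTuples r => ‖∏ i, (((h.1 i : ℂ) + z) ^ s i)⁻¹‖ := by
  rcases r.eq_zero_or_pos with rfl | hr
  · exact Summable.of_finite
  let e : NegTuples r → {f : Fin r → ℤ // ∀ i, |f i| ≤ |f ⟨r - 1, by omega⟩|} :=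
    fun h =>
    ⟨h.1, fun i => by
      rw [abs_of_neg (h.2.2 i), abs_of_neg (h.2.2 _), neg_le_neg_iff]
      exact h.2.1.antitone (show i ≤ ⟨r - 1, _⟩ from Nat.le_sub_one_of_lt i.2)⟩
  have he : Function.Injective e := fun h h' hh =>
    Subtype.ext (by simpa [e] using congrArg Subtype.val hh)
  exact ((summable_norm_prod_inv_intCast_add_pow s _ hs (hs₀ hr) z).comp_injective he).congr
    fun _ => rfl

def wordProd {α R : Type*} [CommMonoid R] (φ : α → ℤ → R) (l : List α)
    (f : Fin l.length → ℤ) : R :=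
  ∏ i, φ (l.get i) (f i)

-- A strictly decreasing `f` is positive before index `(signCut f).1`, zero from there up to
-- `(signCut f).2`, and negative afterwards.
def signCut {r : ℕ} (f : Fin r → ℤ) : ℕ × ℕ := (#{i | 0 < f i}, #{i | 0 ≤ f i})

def cutPairs (r : ℕ) : Finset (ℕ × ℕ) :=
  (Finset.range (r + 1) ×ˢ Finset.range (r + 1)).filter (fun p => p.1 ≤ p.2 ∧ p.2 ≤ p.1 + 1)

theorem mem_cutPairs {r : ℕ} {p : ℕ × ℕ} :
    p ∈ cutPairs r ↔ p.1 ≤ p.2 ∧ p.2 ≤ p.1 + 1 ∧ p.2 ≤ r := by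
  simp only [cutPairs, mem_filter, mem_product, mem_range]
  omega

theorem val_lt_signCut_fst_iff {r : ℕ} {f : Fin r → ℤ} (hf : Antitone f) (i : Fin r) :
    (i : ℕ) < (signCut f).1 ↔ 0 < f i :=
  Fin.lt_card_filter_univ_iff_apply_of_imp _ fun _ _ hji h => h.trans_le (hf hji)

theorem val_lt_signCut_snd_iff {r : ℕ} {f : Fin r → ℤ} (hf : Antitone f) (i : Fin r) :
    (i : ℕ) < (signCut f).2 ↔ 0 ≤ f i :=
  Fin.lt_card_filter_univ_iff_apply_of_imp _ fun _ _ hji h => h.trans (hf hji)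

theorem signCut_mem_cutPairs {r : ℕ} (f : DecTuples r) : signCut f.1 ∈ cutPairs r := by
  obtain ⟨f, hf⟩ := f
  have hpos := val_lt_signCut_fst_iff hf.antitone
  have hnonneg := val_lt_signCut_snd_iff hf.antitone
  simp only [signCut] at hpos hnonneg ⊢
  set a := #{i | 0 < f i}
  set b := #{i | 0 ≤ f i}
  have hab : a ≤ b := card_le_card fun i hi => by
    simp only [mem_filter] at hi ⊢
    exact ⟨hi.1, hi.2.le⟩
  have hbr : b ≤ r := (card_le_univ _).trans_eq (Fintype.card_fin r)
  have hba : b ≤ a + 1 := by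
    by_contra! h
    have hzero : ∀ i : Fin r, (i : ℕ) = a ∨ (i : ℕ) = a + 1 → f i = 0 := fun i hi =>
      le_antisymm (not_lt.1 fun h' => by have := (hpos i).2 h'; omega) ((hnonneg i).1 (by omega))
    have := hf (show (⟨a, by omega⟩ : Fin r) < ⟨a + 1, by omega⟩ from Nat.lt_succ_self a)
    rw [hzero ⟨a, _⟩ (.inl rfl), hzero ⟨a + 1, _⟩ (.inr rfl)] at this
    exact lt_irrefl _ this
  exact mem_cutPairs.2 ⟨hab, hba, hbr⟩

def glue {m n : ℕ} (g : Fin m → ℕ) (b : ℕ) (h : Fin n → ℤ) (k : ℕ) : ℤ :=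
  if hk : k < m then g ⟨k, hk⟩
  else if k < b then 0
  else if hk : k - b < n then h ⟨k - b, hk⟩
  else 0

section glue

variable {m n : ℕ} (g : Fin m → ℕ) {b : ℕ} (h : Fin n → ℤ) {k : ℕ}

theorem glue_of_lt (hk : k < m) : glue g b h k = g ⟨k, hk⟩ := dif_pos hk

theorem glue_of_le_of_lt (hmk : m ≤ k) (hkb : k < b) : glue g b h k = 0 := by
  rw [glue, dif_neg (by omega), if_pos hkb]

theorem glue_of_le (hmb : m ≤ b) (hbk : b ≤ k) (hk : k - b < n) :
    glue g b h k = h ⟨k - b, hk⟩ := by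
  rw [glue, dif_neg (by omega), if_neg (by omega), dif_pos hk]

theorem glue_add (hmb : m ≤ b) (j : Fin n) : glue g b h (b + j) = h j := by
  rw [glue_of_le g h hmb (Nat.le_add_right b j) (by simp)]
  simp

variable {g h}

theorem glue_pos (hg₀ : ∀ i, 0 < g i) (hk : k < m) : 0 < glue g b h k := by
  rw [glue_of_lt g h hk]
  exact_mod_cast hg₀ _

theorem glue_nonpos (hh₀ : ∀ i, h i < 0) (hk : m ≤ k) : glue g b h k ≤ 0 := by
  unfold glue
  split_ifs
  exacts [absurd hk (by omega), le_rfl, (hh₀ _).le, le_rfl]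

theorem glue_neg (hh₀ : ∀ i, h i < 0) (hmb : m ≤ b) (hbk : b ≤ k) (hk : k < b + n) :
    glue g b h k < 0 := by
  rw [glue_of_le g h hmb hbk (by omega)]
  exact hh₀ _

theorem glue_strictAnti (hg : StrictAnti g) (hg₀ : ∀ i, 0 < g i) (hh : StrictAnti h)
    (hh₀ : ∀ i, h i < 0) (hmb : m ≤ b) (hbm : b ≤ m + 1) {r : ℕ} (hr : r ≤ b + n) :
    StrictAnti fun i : Fin r => glue g b h i := by
  intro i j (hij : (i : ℕ) < j)
  show glue g b h j < glue g b h i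
  have hj := j.2
  by_cases hjm : (j : ℕ) < m
  · rw [glue_of_lt g h hjm, glue_of_lt g h (hij.trans hjm)]
    exact_mod_cast hg (Fin.mk_lt_mk.2 hij)
  by_cases him : (i : ℕ) < m
  · exact (glue_nonpos hh₀ (not_lt.1 hjm)).trans_lt (glue_pos hg₀ him)
  by_cases hib : (i : ℕ) < b
  · rw [glue_of_le_of_lt g h (not_lt.1 him) hib]
    exact glue_neg hh₀ hmb (by omega) (by omega)
  rw [glue_of_le g h hmb (not_lt.1 hib) (by omega), glue_of_le g h hmb (by omega) (by omega)]
  exact hh (Fin.mk_lt_mk.2 (by omega))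

end glue

section glueTuple

variable {m n b r : ℕ} (hmb : m ≤ b) (hbm : b ≤ m + 1) (hr : b + n = r)

def glueTuple (x : PosTuples m × NegTuples n) : DecTuples r :=
  ⟨fun i => glue x.1.1 b x.2.1 i,
    glue_strictAnti x.1.2.1 x.1.2.2 x.2.2.1 x.2.2.2 hmb hbm hr.ge⟩

theorem glueTuple_injective : Function.Injective (glueTuple hmb hbm hr) := by
  intro x y hxy
  have hv : ∀ i : Fin r, glue x.1.1 b x.2.1 i = glue y.1.1 b y.2.1 i := fun i =>
    congrFun (congrArg Subtype.val hxy) i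
  refine Prod.ext (Subtype.ext (funext fun i => ?_)) (Subtype.ext (funext fun j => ?_))
  · have := hv ⟨i, by omega⟩
    rwa [glue_of_lt _ _ i.2, glue_of_lt _ _ i.2, Nat.cast_inj] at this
  · have := hv ⟨b + j, by omega⟩
    rwa [glue_add _ _ hmb, glue_add _ _ hmb] at this

theorem signCut_glueTuple (x : PosTuples m × NegTuples n) :
    signCut (glueTuple hmb hbm hr x).1 = (m, b) := by
  have hpos : ∀ i : Fin r, 0 < glue x.1.1 b x.2.1 i ↔ (i : ℕ) < m := fun i =>
    ⟨fun h => not_le.1 fun hi => (glue_nonpos x.2.2.2 hi).not_gt h, glue_pos x.1.2.2⟩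
  have hnonneg : ∀ i : Fin r, 0 ≤ glue x.1.1 b x.2.1 i ↔ (i : ℕ) < b := fun i =>
    ⟨fun h => not_le.1 fun hi => (glue_neg x.2.2.2 hmb hi (by omega)).not_ge h, fun hi =>
      if him : (i : ℕ) < m then (glue_pos x.1.2.2 him).le
      else (glue_of_le_of_lt _ _ (not_lt.1 him) hi).ge⟩
  simp only [signCut, glueTuple, hpos, hnonneg, Fin.card_filter_val_lt]
  congr 1 <;> omega

theorem mem_range_glueTuple {f : DecTuples r} (hf : signCut f.1 = (m, b)) :
    f ∈ Set.range (glueTuple hmb hbm hr) := by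
  have hpos := val_lt_signCut_fst_iff f.2.antitone
  have hnonneg := val_lt_signCut_snd_iff f.2.antitone
  rw [hf] at hpos hnonneg
  let g : PosTuples m := ⟨fun i => (f.1 ⟨i, by omega⟩).toNat,
    fun i j (hij : (i : ℕ) < j) => by
      have := f.2 (show (⟨i, by omega⟩ : Fin r) < ⟨j, by omega⟩ from hij)
      have := (hpos ⟨j, by omega⟩).1 j.2
      dsimp only
      omega,
    fun i => by have := (hpos ⟨i, by omega⟩).1 i.2; dsimp only; omega⟩
  let h : NegTuples n := ⟨fun j => f.1 ⟨b + j, by omega⟩,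
    fun i j hij => f.2 (Fin.mk_lt_mk.2 (by simpa using hij)),
    fun j => not_le.1 fun hj => by simpa using (hnonneg _).2 hj⟩
  refine ⟨(g, h), Subtype.ext (funext fun i => ?_)⟩
  show glue g.1 b h.1 i = f.1 i
  by_cases him : (i : ℕ) < m
  · rw [glue_of_lt _ _ him]
    have := (hpos i).1 him
    simp only [g, Fin.eta]
    omega
  by_cases hib : (i : ℕ) < b
  · rw [glue_of_le_of_lt _ _ (not_lt.1 him) hib]
    have h₁ := mt (hpos i).2 him
    have h₂ := (hnonneg i).1 hib
    omega
  · rw [glue_of_le _ _ hmb (not_lt.1 hib) (by omega)]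
    exact congrArg f.1 (Fin.ext (by simp; omega))

end glueTuple

theorem wordProd_glueTuple {α R : Type*} [CommMonoid R] (φ : α → ℤ → R) (l : List α)
    {a b : ℕ} (h₁ : (l.take a).length ≤ b) (h₂ : b ≤ (l.take a).length + 1)
    (h₃ : b + (l.drop b).length = l.length) (hab : a ≤ b)
    (x : PosTuples (l.take a).length × NegTuples (l.drop b).length) :
    wordProd φ l (glueTuple h₁ h₂ h₃ x).1 =
      wordProd φ (l.take a) (fun i => x.1.1 i) * wordProd φ ((l.drop a).take (b - a)) 0 *
        wordProd φ (l.drop b) x.2.1 := by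
  obtain ⟨c, rfl⟩ := Nat.exists_eq_add_of_le hab
  set F : ℕ → α → R := fun k t => φ t (glue x.1.1 (a + c) x.2.1 k)
  refine (l.prod_get_eq_prod_take_mul_prod_drop a F).trans ?_
  rw [(l.drop a).prod_get_eq_prod_take_mul_prod_drop c fun k => F (a + k), List.drop_drop,
    Nat.add_sub_cancel_left, ← mul_assoc]
  congr 2
  · exact Fintype.prod_congr _ _ fun i => by simp only [F, glue_of_lt _ _ i.2, Fin.eta]
  · refine Fintype.prod_congr _ _ fun j => ?_
    have := j.2
    simp only [List.length_take, List.length_drop] at this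
    simp only [F, glue_of_le_of_lt _ _ ((List.length_take_le a l).trans (Nat.le_add_right a j))
      (by omega : a + j < a + c), Pi.zero_apply]
  · funext j
    simp only [F, ← add_assoc, glue_add _ _ h₁]

section NormedCommRing

variable {α R : Type*} [NormedCommRing R] [CompleteSpace R] (φ : α → ℤ → R) (l : List α)

theorem hasSum_ite_signCut_eq {a b : ℕ} (hab : a ≤ b) (hba : b ≤ a + 1) (hb : b ≤ l.length)
    (hpos : Summable fun g : PosTuples (l.take a).length => ‖wordProd φ (l.take a) (g.1 ·)‖)
    (hneg : Summable fun h : NegTuples (l.drop b).length => ‖wordProd φ (l.drop b) h.1‖) :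
    HasSum (fun f : DecTuples l.length => if signCut f.1 = (a, b) then wordProd φ l f.1 else 0)
      ((∑' g : PosTuples (l.take a).length, wordProd φ (l.take a) (g.1 ·)) *
        wordProd φ ((l.drop a).take (b - a)) 0 *
          ∑' h : NegTuples (l.drop b).length, wordProd φ (l.drop b) h.1) := by
  have hm : (l.take a).length = a := by simp; omega
  have h₁ : (l.take a).length ≤ b := by omega
  have h₂ : b ≤ (l.take a).length + 1 := by omega
  have h₃ : b + (l.drop b).length = l.length := by simp; omega
  have hcut : ∀ x, signCut (glueTuple h₁ h₂ h₃ x).1 = (a, b) := fun x => by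
    rw [signCut_glueTuple, hm]
  have hprod := (summable_mul_of_summable_norm hpos hneg).hasSum
  rw [← tsum_mul_tsum_of_summable_norm hpos hneg] at hprod
  rw [mul_right_comm, ← (glueTuple_injective h₁ h₂ h₃).hasSum_iff fun f hf =>
    if_neg fun h => hf (mem_range_glueTuple h₁ h₂ h₃ (h.trans (by rw [hm])))]
  have hfun : (fun f : DecTuples l.length =>
      if signCut f.1 = (a, b) then wordProd φ l f.1 else 0) ∘ glueTuple h₁ h₂ h₃ =
      fun x => wordProd φ (l.take a) (x.1.1 ·) * wordProd φ (l.drop b) x.2.1 *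
        wordProd φ ((l.drop a).take (b - a)) 0 := by
    funext x
    simp only [Function.comp_apply, hcut, if_true, wordProd_glueTuple φ l h₁ h₂ h₃ hab]
    ring
  rw [hfun]
  exact hprod.mul_right _

theorem hasSum_wordProd_decTuples
    (hpos : ∀ a, Summable fun g : PosTuples (l.take a).length =>
      ‖wordProd φ (l.take a) (g.1 ·)‖)
    (hneg : ∀ b, Summable fun h : NegTuples (l.drop b).length =>
      ‖wordProd φ (l.drop b) h.1‖) :
    HasSum (fun f : DecTuples l.length => wordProd φ l f.1)
      (∑ p ∈ cutPairs l.length,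
        (∑' g : PosTuples (l.take p.1).length, wordProd φ (l.take p.1) (g.1 ·)) *
          wordProd φ ((l.drop p.1).take (p.2 - p.1)) 0 *
            ∑' h : NegTuples (l.drop p.2).length, wordProd φ (l.drop p.2) h.1) := by
  have h := hasSum_sum (s := cutPairs l.length) fun p hp =>
    hasSum_ite_signCut_eq φ l (mem_cutPairs.1 hp).1 (mem_cutPairs.1 hp).2.1
      (mem_cutPairs.1 hp).2.2 (hpos p.1) (hneg p.2)
  have hfun : (fun f : DecTuples l.length => ∑ p ∈ cutPairs l.length,
      if signCut f.1 = (p.1, p.2) then wordProd φ l f.1 else 0) = fun f => wordProd φ l f.1 := by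
    funext f
    simp only [Prod.mk.eta, sum_ite_eq, signCut_mem_cutPairs f, if_true]
  rwa [hfun] at h

end NormedCommRing

end Multitangent

theorem Ce_eq_prod (m : List ℕ) (hm : m.length ≤ 1) (z : ℂ) :
    Ce m z = ∏ i : Fin m.length, (z ^ m.get i)⁻¹ := by
  match m, hm with
  | [], _ => simp [Ce]
  | [t], _ => simp [Ce]

theorem te_trifactorization_general (l : List ℕ)
    (h1 : ∀ x ∈ l, 1 ≤ x) (hb : 2 ≤ l.head!) (he : 2 ≤ l.getLast!)
    (z : ℂ) :
    Te l z =
      ∑ p ∈ (Finset.range (l.length + 1) ×ˢ Finset.range (l.length + 1)).filter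
          (fun p => p.1 ≤ p.2 ∧ p.2 ≤ p.1 + 1),
        HePlus (l.take p.1) z * Ce ((l.drop p.1).take (p.2 - p.1)) z *
          HeMinus (l.drop p.2) z := by
  have hpos a := Multitangent.summable_norm_prod_posTuples (l.take a).get
    (fun i => h1 _ (List.mem_of_mem_take (List.get_mem _ i)))
    (fun h => (List.get_take_zero_eq_head! l a h).ge.trans' hb) z
  have hneg b := Multitangent.summable_norm_prod_negTuples (l.drop b).get
    (fun i => h1 _ (List.mem_of_mem_drop (List.get_mem _ i)))
    (fun h => (List.get_drop_last_eq_getLast! l b h).ge.trans' he) z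
  refine ((Multitangent.hasSum_wordProd_decTuples (fun t n => (((n : ℂ) + z) ^ t)⁻¹) l
    hpos hneg).tsum_eq.trans (sum_congr rfl fun p hp => ?_))
  rw [Ce_eq_prod _ (by simp; have := Multitangent.mem_cutPairs.1 hp; omega)]
  simp [HePlus, HeMinus, Multitangent.wordProd]

/-- Trifactorization of multitangent functions:
`Te^s = Σ_{s = s¹·s²·s³, l(s²) ≤ 1} He₊^{s¹} · Ce^{s²} · He₋^{s³}`. -/
theorem te_trifactorization (l : List ℕ) (hne : l ≠ [])
    (h1 : ∀ x ∈ l, 1 ≤ x) (hb : 2 ≤ l.head!) (he : 2 ≤ l.getLast!)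
    (z : ℂ) (hz : ∀ n : ℤ, z ≠ (n : ℂ)) :
    Te l z =
      ∑ p ∈ (Finset.range (l.length + 1) ×ˢ Finset.range (l.length + 1)).filter
          (fun p => p.1 ≤ p.2 ∧ p.2 ≤ p.1 + 1),
        HePlus (l.take p.1) z * Ce ((l.drop p.1).take (p.2 - p.1)) z *
          HeMinus (l.drop p.2) z :=
  te_trifactorization_general l h1 hb he z
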